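/- arXiv:quant-ph/0511228 — 4 statements merged into one kernel-verified Lean document; each statement's English description precedes it below -/
import Mathlib

section
/- (Gentle coherent measurement) Let ρ_1,…,ρ_K be density operators on ℂ^{d_A} and let Λ_1,…,Λ_K be positive semidefinite matrices on ℂ^{d_A} with ∑_{k=1}^K Λ_k = I (a POVM), and suppose Tr(ρ_k Λ_k) ≥ 1 − ε for all k, where 0 ≤ ε ≤ 1. For each k let |φ_k⟩ ∈ ℂ^{d_R} ⊗ ℂ^{d_A} be a unit vector whose partial trace over the first factor equals ρ_k (a purification of ρ_k). Then there exists a matrix D : ℂ^{d_A} → ℂ^{d_A} ⊗ ℂ^K with D^†D = I (an isometry) such that for every k, ‖(I_{d_R} ⊗ D)|φ_k⟩⟨φ_k|(I_{d_R} ⊗ D)^† − |φ_k⟩⟨φ_k| ⊗ |k⟩⟨k|‖₁ ≤ √(8ε). -/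
/-!
Take `D = ∑ₖ √Λₖ ⊗ |k⟩`; it is an isometry because `∑ₖ Λₖ = 1`. Both
`ψ = (1 ⊗ D) φₖ` and `χ = φₖ ⊗ |k⟩` are unit vectors, and the trace distance of two pure states is
`‖|ψ⟩⟨ψ| - |χ⟩⟨χ|‖₁ = 2 √(1 - |⟨χ|ψ⟩|²)`. The overlap is `⟨χ|ψ⟩ = Tr(ρₖ √Λₖ)`, and since
`0 ≤ Λₖ ≤ 1` forces `Λₖ ≤ √Λₖ`, its real part is at least `Tr(ρₖ Λₖ) ≥ 1 - ε`. Hence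
`1 - |⟨χ|ψ⟩|² ≤ 2ε` and the distance is at most `√(8ε)`.
-/

open Matrix Kronecker ComplexOrder

noncomputable section

def proj {ι : Type*} (v : ι → ℂ) : Matrix ι ι ℂ :=
  Matrix.of fun i j => v i * star (v j)

def ptraceLeft {ι κ : Type*} [Fintype ι] (M : Matrix (ι × κ) (ι × κ) ℂ) : Matrix κ κ ℂ :=
  Matrix.of fun j j' => ∑ i, M (i, j) (i, j')

/-- trace norm `‖M‖₁ = Tr √(MᴴM)`. -/
def traceNorm {ι : Type*} [Fintype ι] [DecidableEq ι] (M : Matrix ι ι ℂ) : ℝ :=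
  (((Matrix.posSemidef_conjTranspose_mul_self M).isHermitian.eigenvectorUnitary.1 *
      Matrix.diagonal (((↑) : ℝ → ℂ) ∘ (Real.sqrt ·) ∘
        (Matrix.posSemidef_conjTranspose_mul_self M).isHermitian.eigenvalues) *
      (star (Matrix.posSemidef_conjTranspose_mul_self M).isHermitian.eigenvectorUnitary :
        Matrix ι ι ℂ)).trace).re

open scoped MatrixOrder

namespace CFC

variable {A : Type*} [Ring A] [StarRing A] [TopologicalSpace A] [PartialOrder A]
  [StarOrderedRing A] [Algebra ℝ A] [ContinuousFunctionalCalculus ℝ A IsSelfAdjoint]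
  [NonnegSpectrumClass ℝ A] [IsTopologicalRing A] [T2Space A]

lemma le_sqrt_of_le_one {a : A} (ha : 0 ≤ a) (ha1 : a ≤ 1) : a ≤ CFC.sqrt a := by
  rw [CFC.sqrt_eq_real_sqrt a, cfcₙ_eq_cfc]
  conv_lhs => rw [← cfc_id' ℝ a]
  exact (cfc_le_iff _ _ a).mpr fun x hx =>
    Real.le_sqrt_self_iff.mpr ((CFC.le_one_iff a).mp ha1 x hx)

end CFC

namespace Matrix.PosSemidef

variable {n : Type*} [Fintype n]

lemma trace_mul_nonneg {𝕜 : Type*} [RCLike 𝕜] {A B : Matrix n n 𝕜} (hA : A.PosSemidef)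
    (hB : B.PosSemidef) : 0 ≤ (A * B).trace := by
  classical
  obtain ⟨X, rfl⟩ := CStarAlgebra.nonneg_iff_eq_star_mul_self.mp hA.nonneg
  rw [star_eq_conjTranspose, mul_assoc, trace_mul_comm]
  exact (hB.mul_mul_conjTranspose_same X).trace_nonneg

lemma re_trace_mul_le {A B C : Matrix n n ℂ} (hA : A.PosSemidef) (hBC : B ≤ C) :
    (A * B).trace.re ≤ (A * C).trace.re := by
  have := hA.trace_mul_nonneg (le_iff.mp hBC)
  rw [mul_sub, trace_sub, sub_nonneg] at this
  exact Complex.re_le_re this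

end Matrix.PosSemidef

lemma star_dotProduct_self_eq_sum_normSq {ι : Type*} [Fintype ι] (v : ι → ℂ) :
    star v ⬝ᵥ v = ((∑ i, Complex.normSq (v i) : ℝ) : ℂ) := by
  simp [dotProduct, Complex.normSq_eq_conj_mul_self]

lemma star_mulVec_dotProduct_mulVec {α β : Type*} [Fintype α] [Fintype β] [DecidableEq β]
    {E : Matrix α β ℂ} (hE : Eᴴ * E = 1) (v : β → ℂ) :
    star (E *ᵥ v) ⬝ᵥ (E *ᵥ v) = star v ⬝ᵥ v := by
  rw [star_mulVec, dotProduct_mulVec, vecMul_vecMul, hE, vecMul_one]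

section PureStates

lemma proj_eq_vecMulVec {ι : Type*} (v : ι → ℂ) : proj v = vecMulVec v (star v) := rfl

lemma mul_proj_mul_conjTranspose {α β : Type*} [Fintype β] (M : Matrix α β ℂ) (v : β → ℂ) :
    M * proj v * Mᴴ = proj (M *ᵥ v) := by
  rw [proj_eq_vecMulVec, proj_eq_vecMulVec, mul_vecMulVec, vecMulVec_mul, star_mulVec]

variable {ι : Type*} [Fintype ι] {ψ χ : ι → ℂ}

lemma proj_sub_proj_cube (hψ : star ψ ⬝ᵥ ψ = 1) (hχ : star χ ⬝ᵥ χ = 1) :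
    (proj ψ - proj χ) * (proj ψ - proj χ) * (proj ψ - proj χ) =
      (1 - Complex.normSq (star χ ⬝ᵥ ψ)) • (proj ψ - proj χ) := by
  have hχψ : star ψ ⬝ᵥ χ = star (star χ ⬝ᵥ ψ) := by rw [star_dotProduct]
  have hnormSq : (Complex.normSq (star χ ⬝ᵥ ψ) : ℂ) = star (star χ ⬝ᵥ ψ) * (star χ ⬝ᵥ ψ) := by
    rw [Complex.normSq_eq_conj_mul_self]; rfl
  rw [← Complex.coe_smul, Complex.ofReal_sub, Complex.ofReal_one, hnormSq]
  simp only [proj_eq_vecMulVec, sub_mul, mul_sub, vecMulVec_mul_vecMulVec, hψ, hχ, hχψ,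
    vecMulVec_smul, one_smul, smul_mul_assoc, smul_sub]
  module

lemma trace_proj_sub_proj_sq (hψ : star ψ ⬝ᵥ ψ = 1) (hχ : star χ ⬝ᵥ χ = 1) :
    ((proj ψ - proj χ) * (proj ψ - proj χ)).trace =
      ((2 * (1 - Complex.normSq (star χ ⬝ᵥ ψ)) : ℝ) : ℂ) := by
  have hχψ : star ψ ⬝ᵥ χ = star (star χ ⬝ᵥ ψ) := by rw [star_dotProduct]
  simp only [proj_eq_vecMulVec, sub_mul, mul_sub, vecMulVec_mul_vecMulVec, trace_sub,
    trace_vecMulVec, dotProduct_smul, smul_eq_mul]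
  rw [dotProduct_comm ψ, dotProduct_comm χ, dotProduct_comm χ, dotProduct_comm ψ, hψ, hχ, hχψ]
  push_cast
  rw [Complex.normSq_eq_conj_mul_self]
  simp only [Complex.star_def]
  ring

end PureStates

section TraceNorm

variable {ι : Type*} [Fintype ι] [DecidableEq ι]

lemma traceNorm_eq_re_trace_sqrt (M : Matrix ι ι ℂ) :
    traceNorm M = (CFC.sqrt (Mᴴ * M)).trace.re := by
  rw [CFC.sqrt_eq_real_sqrt _ (posSemidef_conjTranspose_mul_self M).nonneg, cfcₙ_eq_cfc,
    (posSemidef_conjTranspose_mul_self M).isHermitian.cfc_eq]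
  rfl

lemma traceNorm_eq_re_trace_of_mul_self_eq {M N : Matrix ι ι ℂ} (hN : N.PosSemidef)
    (h : N * N = Mᴴ * M) : traceNorm M = N.trace.re := by
  rw [traceNorm_eq_re_trace_sqrt, CFC.sqrt_unique h hN.nonneg]

lemma traceNorm_proj_sub_proj {ψ χ : ι → ℂ} (hψ : star ψ ⬝ᵥ ψ = 1) (hχ : star χ ⬝ᵥ χ = 1) :
    traceNorm (proj ψ - proj χ) = 2 * √(1 - Complex.normSq (star χ ⬝ᵥ ψ)) := by
  have hcube := proj_sub_proj_cube hψ hχ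
  have htrace := trace_proj_sub_proj_sq hψ hχ
  set M := proj ψ - proj χ
  set c := 1 - Complex.normSq (star χ ⬝ᵥ ψ)
  have hM : Mᴴ = M := by
    simp only [M, proj_eq_vecMulVec, conjTranspose_sub, conjTranspose_vecMulVec, star_star]
  have hMM : (M * M).PosSemidef := by simpa only [hM] using posSemidef_conjTranspose_mul_self M
  have hc : 0 ≤ c := by
    have := hMM.trace_nonneg
    rw [htrace, Complex.zero_le_real] at this
    linarith
  -- `M³ = c M` makes `(√c)⁻¹ M²` the square root of `M²`; if `c = 0`, then `M² = 0`.
  have hN : ((√c)⁻¹ • (M * M)) * ((√c)⁻¹ • (M * M)) = Mᴴ * M := by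
    rw [hM]
    rcases hc.eq_or_lt with h0 | hpos
    · have : M * M = 0 := hMM.trace_eq_zero_iff.mp (by rw [htrace, ← h0]; simp)
      simp [this]
    · rw [smul_mul_smul, ← mul_assoc, hcube, smul_mul_assoc, smul_smul, ← mul_inv,
        Real.mul_self_sqrt hc, inv_mul_cancel₀ hpos.ne', one_smul]
  rw [traceNorm_eq_re_trace_of_mul_self_eq (hMM.smul (inv_nonneg.mpr (Real.sqrt_nonneg c))) hN,
    trace_smul, htrace, Complex.smul_re, Complex.ofReal_re, smul_eq_mul, inv_mul_eq_div,
    mul_div_assoc, Real.div_sqrt]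

end TraceNorm

section Tensor

variable {ρ α κ : Type*}

lemma reindex_prodAssoc_kronecker_proj (u : ρ × α → ℂ) (v : κ → ℂ) :
    reindex (Equiv.prodAssoc ρ α κ) (Equiv.prodAssoc ρ α κ) (proj u ⊗ₖ proj v) =
      proj (fun x => u (x.1, x.2.1) * v x.2.2) := by
  ext ⟨r, a, j⟩ ⟨r', a', j'⟩
  simp only [reindex_apply, submatrix_apply, Equiv.prodAssoc_symm_apply, kroneckerMap_apply,
    proj, of_apply, star_mul']
  ring

variable [Fintype ρ] [Fintype α] [Fintype κ]

lemma star_dotProduct_self_tensor (u : ρ × α → ℂ) (v : κ → ℂ) :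
    star (fun x : ρ × α × κ => u (x.1, x.2.1) * v x.2.2) ⬝ᵥ
        (fun x : ρ × α × κ => u (x.1, x.2.1) * v x.2.2) = (star u ⬝ᵥ u) * (star v ⬝ᵥ v) := by
  simp only [dotProduct, Finset.sum_mul_sum, Pi.star_apply, star_mul']
  simp only [Fintype.sum_prod_type]
  refine Finset.sum_congr rfl fun r _ => Finset.sum_congr rfl fun a _ =>
    Finset.sum_congr rfl fun j _ => by ring

variable [DecidableEq ρ]

lemma star_dotProduct_one_kronecker_mulVec (B : Matrix α α ℂ) (φ : ρ × α → ℂ) :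
    star φ ⬝ᵥ ((1 : Matrix ρ ρ ℂ) ⊗ₖ B) *ᵥ φ = (B * ptraceLeft (proj φ)).trace := by
  simp only [dotProduct, Pi.star_apply, RCLike.star_def, mulVec, kroneckerMap_apply, one_apply,
    ite_mul, one_mul, zero_mul, Fintype.sum_prod_type, Finset.sum_ite_irrel,
    Finset.sum_const_zero, Finset.sum_ite_eq, Finset.mem_univ, ↓reduceIte, Finset.mul_sum, trace,
    ptraceLeft, proj, of_apply, diag_apply, mul_apply]
  rw [Finset.sum_comm]
  refine Finset.sum_congr rfl fun a _ => ?_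
  rw [Finset.sum_comm]
  exact Finset.sum_congr rfl fun a' _ => Finset.sum_congr rfl fun r _ => by ring

lemma star_dotProduct_tensor_single_mulVec [DecidableEq κ] (D : Matrix (α × κ) α ℂ)
    (u φ : ρ × α → ℂ) (k : κ) :
    star (fun x : ρ × α × κ => u (x.1, x.2.1) * if x.2.2 = k then 1 else 0) ⬝ᵥ
        ((1 : Matrix ρ ρ ℂ) ⊗ₖ D) *ᵥ φ =
      star u ⬝ᵥ ((1 : Matrix ρ ρ ℂ) ⊗ₖ D.submatrix (·, k) id) *ᵥ φ := by
  simp [dotProduct, mulVec, Fintype.sum_prod_type, kroneckerMap_apply, one_apply, ite_mul,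
    apply_ite]

end Tensor

def povmIsometry {α κ : Type*} [Fintype α] [DecidableEq α] (Λ : κ → Matrix α α ℂ) :
    Matrix (α × κ) α ℂ :=
  of fun x b => CFC.sqrt (Λ x.2) x.1 b

section POVM

variable {α κ : Type*} [Fintype α] [DecidableEq α]

lemma povmIsometry_submatrix (Λ : κ → Matrix α α ℂ) (k : κ) :
    (povmIsometry Λ).submatrix (·, k) id = CFC.sqrt (Λ k) := rfl

variable [Fintype κ]

lemma conjTranspose_povmIsometry_mul_self {Λ : κ → Matrix α α ℂ} (hΛ : ∀ k, 0 ≤ Λ k)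
    (hsum : ∑ k, Λ k = 1) : (povmIsometry Λ)ᴴ * povmIsometry Λ = 1 := by
  have hsq : ∀ k, (CFC.sqrt (Λ k))ᴴ * CFC.sqrt (Λ k) = Λ k := fun k => by
    rw [← star_eq_conjTranspose, (CFC.sqrt_nonneg (Λ k)).isSelfAdjoint.star_eq,
      CFC.sqrt_mul_sqrt_self (Λ k) (hΛ k)]
  ext b b'
  rw [← hsum, Matrix.sum_apply, mul_apply, Fintype.sum_prod_type, Finset.sum_comm]
  refine Finset.sum_congr rfl fun k _ => ?_
  rw [← hsq k, mul_apply]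
  rfl

end POVM

lemma two_mul_sqrt_one_sub_normSq_le {ε : ℝ} (hε : 0 ≤ ε) {s : ℂ} (hs : 1 - ε ≤ s.re) :
    2 * √(1 - Complex.normSq s) ≤ √(8 * ε) := by
  have h4 : √4 = (2 : ℝ) := by
    rw [show (4 : ℝ) = 2 ^ 2 by norm_num, Real.sqrt_sq zero_le_two]
  calc 2 * √(1 - Complex.normSq s) = √(4 * (1 - Complex.normSq s)) := by
        rw [Real.sqrt_mul zero_le_four, h4]
    _ ≤ √(8 * ε) := Real.sqrt_le_sqrt (by
        rw [Complex.normSq_apply]; nlinarith [sq_nonneg s.im, sq_nonneg (s.re - 1 + ε)])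

theorem gentle_coherent_measurement_general {dA dR K : ℕ} (ε : ℝ) (hε0 : 0 ≤ ε)
    (ρ : Fin K → Matrix (Fin dA) (Fin dA) ℂ)
    (hρ : ∀ k, (ρ k).PosSemidef ∧ (ρ k).trace = 1)
    (Λ : Fin K → Matrix (Fin dA) (Fin dA) ℂ)
    (hΛpos : ∀ k, (Λ k).PosSemidef) (hΛsum : ∑ k, Λ k = 1)
    (hsucc : ∀ k, 1 - ε ≤ ((ρ k * Λ k).trace).re)
    (φ : Fin K → (Fin dR × Fin dA → ℂ))
    (hφunit : ∀ k, ∑ x, Complex.normSq (φ k x) = 1)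
    (hφpur : ∀ k, ptraceLeft (proj (φ k)) = ρ k) :
    ∃ D : Matrix (Fin dA × Fin K) (Fin dA) ℂ, Dᴴ * D = 1 ∧
      ∀ k, traceNorm
          (((1 : Matrix (Fin dR) (Fin dR) ℂ) ⊗ₖ D) * proj (φ k) *
              ((1 : Matrix (Fin dR) (Fin dR) ℂ) ⊗ₖ D)ᴴ -
            Matrix.reindex (Equiv.prodAssoc (Fin dR) (Fin dA) (Fin K))
              (Equiv.prodAssoc (Fin dR) (Fin dA) (Fin K))
              (proj (φ k) ⊗ₖ proj (fun j : Fin K => if j = k then 1 else 0)))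
        ≤ Real.sqrt (8 * ε) := by
  have hΛ : ∀ k, 0 ≤ Λ k := fun k => (hΛpos k).nonneg
  have hD := conjTranspose_povmIsometry_mul_self hΛ hΛsum
  refine ⟨povmIsometry Λ, hD, fun k => ?_⟩
  have hφ : star (φ k) ⬝ᵥ φ k = 1 := by
    rw [star_dotProduct_self_eq_sum_normSq, hφunit k, Complex.ofReal_one]
  have hE : ((1 : Matrix (Fin dR) (Fin dR) ℂ) ⊗ₖ povmIsometry Λ)ᴴ *
      ((1 : Matrix (Fin dR) (Fin dR) ℂ) ⊗ₖ povmIsometry Λ) = 1 := by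
    rw [conjTranspose_kronecker, conjTranspose_one, ← mul_kronecker_mul, one_mul, hD,
      one_kronecker_one]
  have hΛ1 : Λ k ≤ 1 := hΛsum ▸ Finset.single_le_sum (fun j _ => hΛ j) (Finset.mem_univ k)
  rw [mul_proj_mul_conjTranspose, reindex_prodAssoc_kronecker_proj,
    traceNorm_proj_sub_proj (by rw [star_mulVec_dotProduct_mulVec hE, hφ])
      ((star_dotProduct_self_tensor (φ k) fun j => if j = k then 1 else 0).trans (by
        rw [hφ, one_mul]; simp [dotProduct]))]
  refine two_mul_sqrt_one_sub_normSq_le hε0 ?_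
  calc 1 - ε ≤ (ρ k * Λ k).trace.re := hsucc k
    _ ≤ (ρ k * CFC.sqrt (Λ k)).trace.re :=
      (hρ k).1.re_trace_mul_le (CFC.le_sqrt_of_le_one (hΛ k) hΛ1)
    _ = _ := by
      rw [star_dotProduct_tensor_single_mulVec, povmIsometry_submatrix,
        star_dotProduct_one_kronecker_mulVec, hφpur, trace_mul_comm]

/-- **Gentle coherent measurement.**  Given density operators `ρ_k`, a POVM `{Λ_k}` with
`Tr(ρ_k Λ_k) ≥ 1 − ε`, and purifications `|φ_k⟩` of the `ρ_k`, there is an isometry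
`D : ℂ^{dA} → ℂ^{dA} ⊗ ℂ^K` which coherently records `k` while disturbing each `|φ_k⟩`
by at most `√(8ε)` in trace norm. -/
theorem gentle_coherent_measurement {dA dR K : ℕ} (ε : ℝ) (hε0 : 0 ≤ ε) (hε1 : ε ≤ 1)
    (ρ : Fin K → Matrix (Fin dA) (Fin dA) ℂ)
    (hρ : ∀ k, (ρ k).PosSemidef ∧ (ρ k).trace = 1)
    (Λ : Fin K → Matrix (Fin dA) (Fin dA) ℂ)
    (hΛpos : ∀ k, (Λ k).PosSemidef) (hΛsum : ∑ k, Λ k = 1)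
    (hsucc : ∀ k, 1 - ε ≤ ((ρ k * Λ k).trace).re)
    (φ : Fin K → (Fin dR × Fin dA → ℂ))
    (hφunit : ∀ k, ∑ x, Complex.normSq (φ k x) = 1)
    (hφpur : ∀ k, ptraceLeft (proj (φ k)) = ρ k) :
    ∃ D : Matrix (Fin dA × Fin K) (Fin dA) ℂ, Dᴴ * D = 1 ∧
      ∀ k, traceNorm
          (((1 : Matrix (Fin dR) (Fin dR) ℂ) ⊗ₖ D) * proj (φ k) *
              ((1 : Matrix (Fin dR) (Fin dR) ℂ) ⊗ₖ D)ᴴ -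
            Matrix.reindex (Equiv.prodAssoc (Fin dR) (Fin dA) (Fin K))
              (Equiv.prodAssoc (Fin dR) (Fin dA) (Fin K))
              (proj (φ k) ⊗ₖ proj (fun j : Fin K => if j = k then 1 else 0)))
        ≤ Real.sqrt (8 * ε) :=
  gentle_coherent_measurement_general ε hε0 ρ hρ Λ hΛpos hΛsum hsucc φ hφunit hφpur
end
end

section
/- (Packing lemma) Let S be a finite set, let λ : S → [0,1] with ∑_{m∈S} λ_m = 1, and let {σ_m}_{m∈S} be density operators on a finite-dimensional space ℂ^ν with average σ = ∑_{m∈S} λ_m σ_m. Suppose there exist orthogonal projections Π and {Π_m}_{m∈S} on ℂ^ν, positive integers D and d, and ε > 0 such that for all m ∈ S: Tr(σ_m Π_m) ≥ 1 − ε, Tr(σ_m Π) ≥ 1 − ε, Tr(Π_m) ≤ d, and Π σ Π ≤ D^{−1} Π in the Loewner order. Let 0 < γ < 1 and N = ⌊γD/d⌋. Then there exist a map f : {1,…,N} → S and positive semidefinite matrices Λ_1,…,Λ_N on ℂ^ν with ∑_{k=1}^N Λ_k ≤ I, such that Tr(σ_{f(k)} Λ_k) ≥ 1 − 4(ε + √(8ε))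 − 8γ for all k ∈ {1,…,N}. -/
open Matrix ComplexOrder

noncomputable section

namespace PackingAux

variable {ν : ℕ}

/-- complex inner product on `Fin ν → ℂ` -/
def ip (x y : Fin ν → ℂ) : ℂ := dotProduct (star x) y

/-- squared norm -/
def n2 (x : Fin ν → ℂ) : ℝ := (ip x x).re

/-- norm -/
def nn (x : Fin ν → ℂ) : ℝ := Real.sqrt (n2 x)

lemma ip_self_re (x : Fin ν → ℂ) : n2 x = ∑ j, Complex.normSq (x j) := by
  simp only [n2, ip, dotProduct, Pi.star_apply, Complex.re_sum]
  congr 1; ext j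
  simp [Complex.normSq_apply]

lemma n2_nonneg (x : Fin ν → ℂ) : 0 ≤ n2 x := by
  rw [ip_self_re]; exact Finset.sum_nonneg fun j _ => Complex.normSq_nonneg _

lemma nn_sq (x : Fin ν → ℂ) : nn x ^ 2 = n2 x := Real.sq_sqrt (n2_nonneg x)

lemma nn_nonneg (x : Fin ν → ℂ) : 0 ≤ nn x := Real.sqrt_nonneg _

private lemma norm_equiv (x : Fin ν → ℂ) :
    ‖(WithLp.equiv 2 (Fin ν → ℂ)).symm x‖ = nn x := by
  have h2 := inner_self_eq_norm_sq (𝕜 := ℂ) ((WithLp.equiv 2 (Fin ν → ℂ)).symm x)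
  rw [show inner ℂ ((WithLp.equiv 2 (Fin ν → ℂ)).symm x) ((WithLp.equiv 2 (Fin ν → ℂ)).symm x)
      = dotProduct (star x) x from (EuclideanSpace.inner_toLp_toLp x x).trans (dotProduct_comm _ _)] at h2
  have : n2 x = ‖(WithLp.equiv 2 (Fin ν → ℂ)).symm x‖ ^ 2 := by
    rw [n2, ip, show (dotProduct (star x) x).re = RCLike.re (dotProduct (star x) x) from rfl, h2]
  rw [nn, this, Real.sqrt_sq (norm_nonneg _)]

lemma abs_ip_le (x y : Fin ν → ℂ) : ‖ip x y‖ ≤ nn x * nn y := by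
  have h := norm_inner_le_norm (𝕜 := ℂ)
    ((WithLp.equiv 2 (Fin ν → ℂ)).symm x) ((WithLp.equiv 2 (Fin ν → ℂ)).symm y)
  rw [show inner ℂ ((WithLp.equiv 2 (Fin ν → ℂ)).symm x) ((WithLp.equiv 2 (Fin ν → ℂ)).symm y)
      = dotProduct (star x) y from (EuclideanSpace.inner_toLp_toLp x y).trans (dotProduct_comm _ _),
    norm_equiv, norm_equiv] at h
  exact h

lemma re_ip_le (x y : Fin ν → ℂ) : (ip x y).re ≤ nn x * nn y :=
  (Complex.re_le_norm _).trans (abs_ip_le x y)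

lemma ip_conj (x y : Fin ν → ℂ) : ip y x = star (ip x y) := by
  rw [ip, ip, Matrix.star_dotProduct]

lemma ip_mulVec_left (A : Matrix (Fin ν) (Fin ν) ℂ) (x y : Fin ν → ℂ) :
    ip (A *ᵥ x) y = ip x (Aᴴ *ᵥ y) := by
  rw [ip, ip, Matrix.star_mulVec, Matrix.dotProduct_mulVec]

lemma ip_add_right (x y z : Fin ν → ℂ) : ip x (y + z) = ip x y + ip x z :=
  dotProduct_add _ _ _

lemma ip_add_left (x y z : Fin ν → ℂ) : ip (x + y) z = ip x z + ip y z := by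
  rw [ip, star_add, add_dotProduct]; rfl

lemma n2_add (x y : Fin ν → ℂ) : n2 (x + y) = n2 x + n2 y + 2 * (ip x y).re := by
  have : ip (x + y) (x + y) = ip x x + ip y y + (ip x y + ip y x) := by
    rw [ip_add_left, ip_add_right, ip_add_right]; ring
  rw [n2, this, ip_conj x y]
  simp [n2]
  ring

lemma n2_add_of_orth {a b : Fin ν → ℂ} (h : ip a b = 0) : n2 (a + b) = n2 a + n2 b := by
  rw [n2_add, h]; simp

lemma proj_pyth {B : Matrix (Fin ν) (Fin ν) ℂ} (hH : B.IsHermitian) (hI : B * B = B)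
    (x : Fin ν → ℂ) : n2 x = n2 (B *ᵥ x) + n2 (x - B *ᵥ x) := by
  have horth : ip (B *ᵥ x) (x - B *ᵥ x) = 0 := by
    rw [ip_mulVec_left, hH.eq]
    have : B *ᵥ (x - B *ᵥ x) = 0 := by
      rw [Matrix.mulVec_sub, Matrix.mulVec_mulVec, hI, sub_self]
    rw [this, ip, dotProduct_zero]
  have hxx : x = B *ᵥ x + (x - B *ᵥ x) := by ring_nf
  calc n2 x = n2 (B *ᵥ x + (x - B *ᵥ x)) := by rw [← hxx]
  _ = _ := n2_add_of_orth horth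

lemma n2_proj_le {B : Matrix (Fin ν) (Fin ν) ℂ} (hH : B.IsHermitian) (hI : B * B = B)
    (x : Fin ν → ℂ) : n2 (B *ᵥ x) ≤ n2 x := by
  rw [proj_pyth hH hI x]; linarith [n2_nonneg (x - B *ᵥ x)]

lemma nn_proj_le {B : Matrix (Fin ν) (Fin ν) ℂ} (hH : B.IsHermitian) (hI : B * B = B)
    (x : Fin ν → ℂ) : nn (B *ᵥ x) ≤ nn x :=
  Real.sqrt_le_sqrt (n2_proj_le hH hI x)

lemma n2_neg (y : Fin ν → ℂ) : n2 (-y) = n2 y := by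
  rw [n2, n2, ip, ip, star_neg, neg_dotProduct, dotProduct_neg, neg_neg]

lemma nn_neg (y : Fin ν → ℂ) : nn (-y) = nn y := by rw [nn, nn, n2_neg]

lemma nn_sub_le (x y : Fin ν → ℂ) : nn (x - y) ≤ nn x + nn y := by
  have h : n2 (x - y) ≤ (nn x + nn y) ^ 2 := by
    have hxy : x - y = x + (-y) := by ring
    have hre : (ip x (-y)).re ≤ nn x * nn y := by
      have := re_ip_le x (-y)
      rwa [nn_neg] at this
    rw [hxy, n2_add, n2_neg]
    have hx := nn_sq x; have hy := nn_sq y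
    nlinarith
  calc nn (x - y) = Real.sqrt (n2 (x - y)) := rfl
  _ ≤ Real.sqrt ((nn x + nn y) ^ 2) := Real.sqrt_le_sqrt h
  _ = nn x + nn y := Real.sqrt_sq (by have := nn_nonneg x; have := nn_nonneg y; linarith)

lemma sqrt_cs {p q r s : ℝ} (hp : 0 ≤ p) (hq : 0 ≤ q) (hr : 0 ≤ r) (hs : 0 ≤ s) :
    Real.sqrt (p*q) + Real.sqrt (r*s) ≤ Real.sqrt ((p+r)*(q+s)) := by
  have e1 : Real.sqrt (p*q) = Real.sqrt p * Real.sqrt q := Real.sqrt_mul hp q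
  have e2 : Real.sqrt (r*s) = Real.sqrt r * Real.sqrt s := Real.sqrt_mul hr s
  have sp := Real.sq_sqrt hp; have sq := Real.sq_sqrt hq
  have sr := Real.sq_sqrt hr; have ss := Real.sq_sqrt hs
  have np := Real.sqrt_nonneg p; have nq := Real.sqrt_nonneg q
  have nr := Real.sqrt_nonneg r; have ns := Real.sqrt_nonneg s
  have key : (Real.sqrt p * Real.sqrt q + Real.sqrt r * Real.sqrt s)^2 ≤ (p+r)*(q+s) := by
    nlinarith [sq_nonneg (Real.sqrt p * Real.sqrt s - Real.sqrt r * Real.sqrt q)]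
  rw [e1, e2]
  calc Real.sqrt p * Real.sqrt q + Real.sqrt r * Real.sqrt s
      = Real.sqrt ((Real.sqrt p * Real.sqrt q + Real.sqrt r * Real.sqrt s)^2) :=
        (Real.sqrt_sq (by positivity)).symm
  _ ≤ Real.sqrt ((p+r)*(q+s)) := Real.sqrt_le_sqrt key

/-- ordered product of a sequence of operators: `chain g n = g (n-1) * ⋯ * g 0`. -/
def chain (g : ℕ → Matrix (Fin ν) (Fin ν) ℂ) : ℕ → Matrix (Fin ν) (Fin ν) ℂ
  | 0 => 1
  | n+1 => g n * chain g n

lemma chain_congr {g h : ℕ → Matrix (Fin ν) (Fin ν) ℂ} (n : ℕ)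
    (hgh : ∀ j < n, g j = h j) : chain g n = chain h n := by
  induction n with
  | zero => rfl
  | succ n ih =>
      rw [chain, chain, hgh n (Nat.lt_succ_self n),
        ih (fun j hj => hgh j (hj.trans (Nat.lt_succ_self n)))]

theorem gao_aux (g : ℕ → Matrix (Fin ν) (Fin ν) ℂ)
    (hg : ∀ j, (g j).IsHermitian ∧ g j * g j = g j) (x : Fin ν → ℂ) (n : ℕ) :
    n2 (x - chain g n *ᵥ x) ≤ (∑ j ∈ Finset.range n, (n2 x - n2 (g j *ᵥ x))) ∧
    n2 x - n2 (chain g n *ᵥ x) ≤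
      (∑ j ∈ Finset.range n, (n2 x - n2 (g j *ᵥ x)))
      + 2 * Real.sqrt ((∑ j ∈ Finset.range n, (n2 x - n2 (g j *ᵥ x))) *
          ((∑ j ∈ Finset.range n, (n2 x - n2 (g j *ᵥ x))) - n2 (x - chain g n *ᵥ x)))
      + ((∑ j ∈ Finset.range n, (n2 x - n2 (g j *ᵥ x))) - n2 (x - chain g n *ᵥ x)) := by
  induction n with
  | zero =>
      simp only [chain, Finset.range_zero, Finset.sum_empty, Matrix.one_mulVec, sub_self]
      have h0 : n2 (0 : Fin ν → ℂ) = 0 := by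
        simp [n2, ip, dotProduct_zero]
      rw [h0]
      norm_num
  | succ n ih =>
      obtain ⟨ih1, ih2⟩ := ih
      set φ := chain g n *ᵥ x with hφ
      set A := ∑ j ∈ Finset.range n, (n2 x - n2 (g j *ᵥ x)) with hA
      set δ := n2 (x - φ) with hδ
      set U := A - δ with hU
      have hGH := (hg n).1
      have hGI := (hg n).2
      set a := n2 x - n2 (g n *ᵥ x) with ha
      have ha0 : 0 ≤ a := by
        have := proj_pyth hGH hGI x; have := n2_nonneg (x - g n *ᵥ x); rw [ha]; linarith
      set w := x - φ with hw
      set u := n2 (w - g n *ᵥ w) with hu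
      set v := n2 (g n *ᵥ w) with hv
      have huv : u + v = δ := by
        have := proj_pyth hGH hGI w; rw [hu, hv, hδ]; linarith
      have hu0 : 0 ≤ u := n2_nonneg _
      have hv0 : 0 ≤ v := n2_nonneg _
      have hδ0 : 0 ≤ δ := n2_nonneg _
      have hA0 : 0 ≤ A := le_trans hδ0 ih1
      have hchain : chain g (n+1) *ᵥ x = g n *ᵥ φ := by
        rw [chain, ← Matrix.mulVec_mulVec]
      have hdecomp : x - g n *ᵥ φ = (x - g n *ᵥ x) + g n *ᵥ w := by
        rw [hw, Matrix.mulVec_sub]; ring_nf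
      have horth : ip (x - g n *ᵥ x) (g n *ᵥ w) = 0 := by
        have h1m : x - g n *ᵥ x = (1 - g n) *ᵥ x := by
          rw [Matrix.sub_mulVec, Matrix.one_mulVec]
        have hherm : (1 - g n)ᴴ = 1 - g n := by
          rw [Matrix.conjTranspose_sub, Matrix.conjTranspose_one, hGH.eq]
        rw [h1m, ip_mulVec_left, hherm]
        have : (1 - g n) *ᵥ (g n *ᵥ w) = 0 := by
          rw [Matrix.mulVec_mulVec, Matrix.sub_mul, Matrix.one_mul, hGI, sub_self,
            Matrix.zero_mulVec]
        rw [this, ip, dotProduct_zero]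
      have hδ' : n2 (x - chain g (n+1) *ᵥ x) = a + v := by
        rw [hchain, hdecomp, n2_add_of_orth horth, hv]
        congr 1
        have := proj_pyth hGH hGI x
        rw [ha]; linarith
      have hxsub : n2 (x - g n *ᵥ x) = a := by
        have := proj_pyth hGH hGI x; rw [ha]; linarith
      have hwsub : φ - g n *ᵥ φ = (x - g n *ᵥ x) - (w - g n *ᵥ w) := by
        rw [hw, Matrix.mulVec_sub]; ring_nf
      have hη : n2 (φ - g n *ᵥ φ) ≤ a + 2 * Real.sqrt (a * u) + u := by
        have h1 : nn (φ - g n *ᵥ φ) ≤ Real.sqrt a + Real.sqrt u := by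
          rw [hwsub]
          calc nn ((x - g n *ᵥ x) - (w - g n *ᵥ w)) ≤ nn (x - g n *ᵥ x) + nn (w - g n *ᵥ w) :=
                nn_sub_le _ _
          _ = Real.sqrt a + Real.sqrt u := by rw [nn, nn, hxsub, hu]
        have h2 : n2 (φ - g n *ᵥ φ) ≤ (Real.sqrt a + Real.sqrt u)^2 := by
          rw [← nn_sq]
          exact pow_le_pow_left₀ (nn_nonneg _) h1 2
        have h3 : (Real.sqrt a + Real.sqrt u)^2 = a + 2*Real.sqrt (a*u) + u := by
          rw [add_sq, Real.sq_sqrt ha0, Real.sq_sqrt hu0, Real.sqrt_mul ha0]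
          ring
        linarith
      have hL' : n2 x - n2 (chain g (n+1) *ᵥ x) =
          (n2 x - n2 φ) + n2 (φ - g n *ᵥ φ) := by
        rw [hchain]
        have := proj_pyth hGH hGI φ
        linarith
      have hsum : (∑ j ∈ Finset.range (n+1), (n2 x - n2 (g j *ᵥ x))) = A + a := by
        rw [Finset.sum_range_succ, hA, ha]
      constructor
      · rw [hδ', hsum]
        linarith
      · rw [hδ', hsum, hL']
        have hU'eq : A + a - (a + v) = U + u := by rw [hU]; linarith
        rw [hU'eq]
        have hU0 : 0 ≤ U := by rw [hU]; linarith
        have hcs : Real.sqrt (A * U) + Real.sqrt (a * u) ≤ Real.sqrt ((A + a) * (U + u)) :=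
          sqrt_cs hA0 hU0 ha0 hu0
        linarith [ih2]

theorem gao (g : ℕ → Matrix (Fin ν) (Fin ν) ℂ)
    (hg : ∀ j, (g j).IsHermitian ∧ g j * g j = g j) (x : Fin ν → ℂ) (n : ℕ) :
    n2 x - n2 (chain g n *ᵥ x) ≤ 4 * ∑ j ∈ Finset.range n, (n2 x - n2 (g j *ᵥ x)) := by
  obtain ⟨h1, h2⟩ := gao_aux g hg x n
  set A := ∑ j ∈ Finset.range n, (n2 x - n2 (g j *ᵥ x)) with hA
  set δ := n2 (x - chain g n *ᵥ x) with hδ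
  have hδ0 : 0 ≤ δ := n2_nonneg _
  have hA0 : 0 ≤ A := le_trans hδ0 h1
  have : Real.sqrt (A * (A - δ)) ≤ A := by
    calc Real.sqrt (A * (A - δ)) ≤ Real.sqrt (A * A) := by
          apply Real.sqrt_le_sqrt; nlinarith
    _ = A := by rw [Real.sqrt_mul_self hA0]
  linarith

/-- the vectors of a PSD decomposition -/
def xvec (B : Matrix (Fin ν) (Fin ν) ℂ) (i : Fin ν) : Fin ν → ℂ := fun j => star (B i j)

lemma sum_ip (B X : Matrix (Fin ν) (Fin ν) ℂ) :
    ∑ i, ip (xvec B i) (X *ᵥ xvec B i) = (Bᴴ * B * X).trace := by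
  have h1 : (Bᴴ * B * X).trace = (B * X * Bᴴ).trace := by
    rw [Matrix.mul_assoc, Matrix.trace_mul_comm]
  rw [h1, Matrix.trace]
  congr 1; ext i
  simp only [Matrix.diag_apply, Matrix.mul_apply, ip, dotProduct, xvec, Pi.star_apply,
    Matrix.mulVec, Matrix.conjTranspose_apply, star_star, dotProduct]
  simp_rw [Finset.mul_sum, Finset.sum_mul]
  rw [Finset.sum_comm]
  congr 1; ext l
  congr 1; ext j
  ring

lemma sum_ip_re (B X : Matrix (Fin ν) (Fin ν) ℂ) :
    ∑ i, (ip (xvec B i) (X *ᵥ xvec B i)).re = ((Bᴴ * B * X).trace).re := by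
  rw [← sum_ip, Complex.re_sum]

lemma n2_mulVec_eq (M : Matrix (Fin ν) (Fin ν) ℂ) (x : Fin ν → ℂ) :
    n2 (M *ᵥ x) = (ip x ((Mᴴ * M) *ᵥ x)).re := by
  rw [n2, ip_mulVec_left, Matrix.mulVec_mulVec]

lemma sum_n2_mulVec (B M : Matrix (Fin ν) (Fin ν) ℂ) :
    ∑ i, n2 (M *ᵥ xvec B i) = ((Bᴴ * B * (Mᴴ * M)).trace).re := by
  rw [← sum_ip_re]
  congr 1; ext i
  rw [n2_mulVec_eq]

lemma psd_re_dot_nonneg {Q : Matrix (Fin ν) (Fin ν) ℂ} (hQ : Q.PosSemidef) (x : Fin ν → ℂ) :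
    0 ≤ (ip x (Q *ᵥ x)).re := by
  have := hQ.dotProduct_mulVec_nonneg x
  rw [Complex.le_def] at this
  simpa [ip] using this.1

open scoped MatrixOrder in
lemma psd_decomp {A : Matrix (Fin ν) (Fin ν) ℂ} (hA : A.PosSemidef) : ∃ B, A = Bᴴ * B := by
  classical
  obtain ⟨X, hX, -, hXX⟩ :=
    CFC.exists_sqrt_of_isSelfAdjoint_of_quasispectrumRestricts hA.isHermitian
      (QuasispectrumRestricts.nnreal_of_nonneg hA.nonneg)
  refine ⟨X, ?_⟩
  rw [← hXX]
  exact congrArg (· * X) hX.star_eq.symm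

lemma trace_mul_psd_nonneg {A Q : Matrix (Fin ν) (Fin ν) ℂ}
    (hA : A.PosSemidef) (hQ : Q.PosSemidef) : 0 ≤ ((A * Q).trace).re := by
  obtain ⟨B, rfl⟩ := psd_decomp hA
  rw [← sum_ip_re]
  exact Finset.sum_nonneg fun i _ => psd_re_dot_nonneg hQ _

lemma herm_idem_psd {Q : Matrix (Fin ν) (Fin ν) ℂ} (hH : Q.IsHermitian) (hI : Q * Q = Q) :
    Q.PosSemidef := by
  have := Matrix.posSemidef_conjTranspose_mul_self Q
  rwa [hH.eq, hI] at this

lemma one_sub_herm {Q : Matrix (Fin ν) (Fin ν) ℂ} (hH : Q.IsHermitian) :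
    (1 - Q).IsHermitian := by
  have : (1 - Q)ᴴ = 1 - Q := by
    rw [Matrix.conjTranspose_sub, Matrix.conjTranspose_one, hH.eq]
  exact this

lemma one_sub_idem {Q : Matrix (Fin ν) (Fin ν) ℂ} (hI : Q * Q = Q) :
    (1 - Q) * (1 - Q) = 1 - Q := by
  have : ((1:Matrix (Fin ν) (Fin ν) ℂ) - Q) * (1 - Q) = 1 - Q - Q + Q * Q := by
    noncomm_ring
  rw [this, hI]
  abel

lemma sandwich {Q : Matrix (Fin ν) (Fin ν) ℂ} (P : Matrix (Fin ν) (Fin ν) ℂ)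
    (hQH : Q.IsHermitian) (hQI : Q * Q = Q) :
    (Q * P)ᴴ * (Q * P) = Pᴴ * Q * P := by
  rw [Matrix.conjTranspose_mul]
  calc Pᴴ * Qᴴ * (Q * P) = Pᴴ * (Qᴴ * Q) * P := by noncomm_ring
  _ = Pᴴ * Q * P := by rw [hQH.eq, hQI]

/-- real Cauchy–Schwarz for the `nn` sums -/
lemma sum_nn_mul_nn_le {f g : Fin ν → (Fin ν → ℂ)} :
    ∑ i, nn (f i) * nn (g i) ≤ Real.sqrt (∑ i, n2 (f i)) * Real.sqrt (∑ i, n2 (g i)) := by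
  have h := Finset.sum_mul_sq_le_sq_mul_sq Finset.univ (fun i => nn (f i)) (fun i => nn (g i))
  simp_rw [nn_sq] at h
  have h0 : 0 ≤ ∑ i, nn (f i) * nn (g i) :=
    Finset.sum_nonneg fun i _ => mul_nonneg (nn_nonneg _) (nn_nonneg _)
  calc ∑ i, nn (f i) * nn (g i) = Real.sqrt ((∑ i, nn (f i) * nn (g i))^2) :=
        (Real.sqrt_sq h0).symm
  _ ≤ Real.sqrt ((∑ i, n2 (f i)) * (∑ i, n2 (g i))) := Real.sqrt_le_sqrt h
  _ = _ := Real.sqrt_mul (Finset.sum_nonneg fun i _ => n2_nonneg _) _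

lemma gentle (B P Pj : Matrix (Fin ν) (Fin ν) ℂ)
    (hPH : P.IsHermitian) (hPI : P * P = P) (hPjH : Pj.IsHermitian) (hPjI : Pj * Pj = Pj) :
    ((Bᴴ * B * Pj).trace).re - ((Bᴴ * B * (P * Pj * P)).trace).re ≤
      2 * Real.sqrt (((Bᴴ * B * (1 - P)).trace).re) * Real.sqrt (((Bᴴ * B).trace).re) := by
  set x : Fin ν → (Fin ν → ℂ) := xvec B with hx
  set y : Fin ν → (Fin ν → ℂ) := fun i => P *ᵥ x i with hy
  set r : Fin ν → (Fin ν → ℂ) := fun i => x i - y i with hr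
  have hpt : ∀ i, (ip (x i) (Pj *ᵥ x i)).re - (ip (x i) ((P * Pj * P) *ᵥ x i)).re ≤
      2 * (nn (r i) * nn (x i)) := by
    intro i
    have hsplit : x i = y i + r i := by rw [hr]; ring
    have hPQP : ip (x i) ((P * Pj * P) *ᵥ x i) = ip (y i) (Pj *ᵥ y i) := by
      rw [hy]
      rw [ip_mulVec_left, hPH.eq, Matrix.mulVec_mulVec, Matrix.mulVec_mulVec]
    have hmv : Pj *ᵥ x i = Pj *ᵥ y i + Pj *ᵥ r i := by
      rw [← Matrix.mulVec_add, ← hsplit]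
    have hid : ip (x i) (Pj *ᵥ x i) =
        ip (y i) (Pj *ᵥ y i) + ip (y i) (Pj *ᵥ r i) + ip (r i) (Pj *ᵥ x i) := by
      nth_rewrite 1 [hsplit]
      rw [ip_add_left]
      nth_rewrite 1 [hmv]
      rw [ip_add_right]
    have b1 : (ip (y i) (Pj *ᵥ r i)).re ≤ nn (x i) * nn (r i) := by
      calc (ip (y i) (Pj *ᵥ r i)).re ≤ nn (y i) * nn (Pj *ᵥ r i) := re_ip_le _ _
      _ ≤ nn (x i) * nn (r i) := by
          apply mul_le_mul
          · rw [hy]; exact nn_proj_le hPH hPI _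
          · exact nn_proj_le hPjH hPjI _
          · exact nn_nonneg _
          · exact nn_nonneg _
    have b2 : (ip (r i) (Pj *ᵥ x i)).re ≤ nn (r i) * nn (x i) := by
      calc (ip (r i) (Pj *ᵥ x i)).re ≤ nn (r i) * nn (Pj *ᵥ x i) := re_ip_le _ _
      _ ≤ nn (r i) * nn (x i) := by
          apply mul_le_mul_of_nonneg_left (nn_proj_le hPjH hPjI _) (nn_nonneg _)
    rw [hPQP, hid]
    simp only [Complex.add_re]
    nlinarith [nn_nonneg (r i), nn_nonneg (x i)]
  have hsum : ((Bᴴ * B * Pj).trace).re - ((Bᴴ * B * (P * Pj * P)).trace).re ≤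
      2 * ∑ i, nn (r i) * nn (x i) := by
    rw [← sum_ip_re, ← sum_ip_re, ← Finset.sum_sub_distrib, Finset.mul_sum]
    exact Finset.sum_le_sum fun i _ => hpt i
  have hCS := sum_nn_mul_nn_le (f := r) (g := x)
  have hr2 : ∑ i, n2 (r i) = ((Bᴴ * B * (1 - P)).trace).re := by
    have hM : ∀ i, r i = (1 - P) *ᵥ x i := by
      intro i; rw [hr, hy, Matrix.sub_mulVec, Matrix.one_mulVec]
    have h1P : (1 - P)ᴴ * (1 - P) = 1 - P := by
      rw [(one_sub_herm hPH).eq]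
      exact one_sub_idem hPI
    calc ∑ i, n2 (r i) = ∑ i, n2 ((1 - P) *ᵥ x i) := by simp_rw [hM]
    _ = ((Bᴴ * B * ((1 - P)ᴴ * (1 - P))).trace).re := sum_n2_mulVec B (1 - P)
    _ = _ := by rw [h1P]
  have hx2 : ∑ i, n2 (x i) = ((Bᴴ * B).trace).re := by
    have h1 : ∀ i, x i = (1 : Matrix (Fin ν) (Fin ν) ℂ) *ᵥ x i := by
      intro i; rw [Matrix.one_mulVec]
    calc ∑ i, n2 (x i) = ∑ i, n2 ((1 : Matrix (Fin ν) (Fin ν) ℂ) *ᵥ x i) := by simp_rw [← h1]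
    _ = ((Bᴴ * B * ((1:Matrix (Fin ν) (Fin ν) ℂ)ᴴ * 1)).trace).re := sum_n2_mulVec B 1
    _ = _ := by rw [Matrix.conjTranspose_one, Matrix.mul_one, Matrix.mul_one]
  rw [hr2, hx2] at hCS
  calc ((Bᴴ * B * Pj).trace).re - ((Bᴴ * B * (P * Pj * P)).trace).re
      ≤ 2 * ∑ i, nn (r i) * nn (x i) := hsum
  _ ≤ 2 * (Real.sqrt (((Bᴴ * B * (1 - P)).trace).re) * Real.sqrt (((Bᴴ * B).trace).re)) := by
      linarith
  _ = _ := by ring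

lemma exists_le_of_weighted {ι : Type*} [Fintype ι] (lam : ι → ℝ) (v : ι → ℝ) (c : ℝ)
    (h0 : ∀ m, 0 ≤ lam m) (h1 : ∑ m, lam m = 1) (hc : ∑ m, lam m * v m ≤ c) :
    ∃ m, v m ≤ c := by
  by_contra hall
  push_neg at hall
  have hterm : ∀ m, 0 ≤ lam m * (v m - c) := fun m =>
    mul_nonneg (h0 m) (by linarith [hall m])
  have hsum0 : ∑ m, lam m * (v m - c) ≤ 0 := by
    have hexp : ∑ m, lam m * (v m - c) = (∑ m, lam m * v m) - c := by
      simp_rw [mul_sub]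
      rw [Finset.sum_sub_distrib, ← Finset.sum_mul, h1, one_mul]
    linarith
  have hz : ∑ m, lam m * (v m - c) = 0 :=
    le_antisymm hsum0 (Finset.sum_nonneg fun m _ => hterm m)
  have hzz := (Finset.sum_eq_zero_iff_of_nonneg (fun m _ => hterm m)).mp hz
  have : ∀ m : ι, lam m = 0 := by
    intro m
    have h := hzz m (Finset.mem_univ m)
    rcases mul_eq_zero.mp h with h' | h'
    · exact h'
    · exfalso; have := hall m; linarith
  rw [Finset.sum_congr rfl (fun m _ => this m), Finset.sum_const_zero] at h1
  exact zero_ne_one h1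

end PackingAux

open PackingAux

set_option maxHeartbeats 1000000 in
/-- **Packing lemma.** -/
theorem packing_lemma {ι : Type*} [Fintype ι] {ν : ℕ}
    (lam : ι → ℝ) (hlam0 : ∀ m, 0 ≤ lam m) (hlam1 : ∀ m, lam m ≤ 1)
    (hlamsum : ∑ m, lam m = 1)
    (σ : ι → Matrix (Fin ν) (Fin ν) ℂ)
    (hσ : ∀ m, (σ m).PosSemidef ∧ (σ m).trace = 1)
    (P : Matrix (Fin ν) (Fin ν) ℂ) (Pm : ι → Matrix (Fin ν) (Fin ν) ℂ)
    (hP : P.IsHermitian ∧ P * P = P)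
    (hPm : ∀ m, (Pm m).IsHermitian ∧ Pm m * Pm m = Pm m)
    (D d : ℕ) (hD : 0 < D) (hd : 0 < d)
    (ε : ℝ) (hε : 0 < ε)
    (h1 : ∀ m, 1 - ε ≤ ((σ m * Pm m).trace).re)
    (h2 : ∀ m, 1 - ε ≤ ((σ m * P).trace).re)
    (h3 : ∀ m, ((Pm m).trace).re ≤ d)
    (h4 : (((D : ℂ))⁻¹ • P - P * (∑ m, (lam m : ℂ) • σ m) * P).PosSemidef)
    (γ : ℝ) (hγ0 : 0 < γ) (hγ1 : γ < 1) :
    ∃ f : Fin (Nat.floor (γ * D / d)) → ι,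
    ∃ Λ : Fin (Nat.floor (γ * D / d)) → Matrix (Fin ν) (Fin ν) ℂ,
      (∀ k, (Λ k).PosSemidef) ∧
      ((1 : Matrix (Fin ν) (Fin ν) ℂ) - ∑ k, Λ k).PosSemidef ∧
      ∀ k, 1 - 4 * (ε + Real.sqrt (8 * ε)) - 8 * γ ≤ ((σ (f k) * Λ k).trace).re := by
  classical
  have hι : Nonempty ι := by
    by_contra h
    rw [not_nonempty_iff] at h
    rw [Finset.univ_eq_empty, Finset.sum_empty] at hlamsum
    exact zero_ne_one hlamsum
  obtain ⟨m₀⟩ := hι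
  by_cases hbig : 1 - 4 * (ε + Real.sqrt (8 * ε)) - 8 * γ ≤ 0
  · refine ⟨fun _ => m₀, fun _ => 0, fun k => Matrix.PosSemidef.zero, ?_, ?_⟩
    · simpa using Matrix.PosSemidef.one
    · intro k
      simpa using hbig
  push_neg at hbig
  set N := Nat.floor (γ * D / d) with hN
  have hε0 : (0:ℝ) ≤ ε := le_of_lt hε
  -- arithmetic preliminaries
  have hs8 : Real.sqrt (8*ε) < 1/4 := by nlinarith [Real.sqrt_nonneg (8*ε)]
  have hsε : Real.sqrt ε ≤ Real.sqrt (8*ε) := Real.sqrt_le_sqrt (by linarith)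
  have hε14 : ε ≤ (1/4) * Real.sqrt ε := by
    have hlt : Real.sqrt ε < 1/4 := lt_of_le_of_lt hsε hs8
    nlinarith [Real.sq_sqrt hε0, Real.sqrt_nonneg ε]
  have h28 : 2.8 * Real.sqrt ε ≤ Real.sqrt (8*ε) := by
    rw [Real.sqrt_mul (by norm_num : (0:ℝ) ≤ 8)]
    have h8 : (2.8:ℝ) ≤ Real.sqrt 8 := by
      rw [show (2.8:ℝ) = Real.sqrt (2.8^2) from (Real.sqrt_sq (by norm_num)).symm]
      exact Real.sqrt_le_sqrt (by norm_num)
    nlinarith [Real.sqrt_nonneg ε]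
  -- basic projector facts
  have hPH := hP.1
  have hPI := hP.2
  have hP_psd : P.PosSemidef := herm_idem_psd hPH hPI
  have h1P_psd : ((1:Matrix (Fin ν) (Fin ν) ℂ) - P).PosSemidef :=
    herm_idem_psd (one_sub_herm hPH) (one_sub_idem hPI)
  have hPm_psd : ∀ m, (Pm m).PosSemidef := fun m => herm_idem_psd (hPm m).1 (hPm m).2
  -- N * d ≤ γ * D
  have hNdD : (N:ℝ) * d ≤ γ * D := by
    have := Nat.floor_le (show (0:ℝ) ≤ γ * D / d by positivity)
    rw [← hN] at this
    calc (N:ℝ) * d ≤ (γ * D / d) * d := by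
          apply mul_le_mul_of_nonneg_right this (by positivity)
    _ = γ * D := by field_simp
  -- average state bound: for any projector Q with trace ≤ d
  have key_avg : ∀ Q : Matrix (Fin ν) (Fin ν) ℂ, Q.IsHermitian → Q * Q = Q →
      ((Q.trace).re ≤ d) →
      (((∑ m, (lam m : ℂ) • σ m) * (P * Q * P)).trace).re ≤ (d:ℝ)/D := by
    intro Q hQH hQI hQd
    have hQ_psd : Q.PosSemidef := herm_idem_psd hQH hQI
    have hcyc : ((∑ m, (lam m : ℂ) • σ m) * (P * Q * P)).trace
        = ((P * (∑ m, (lam m : ℂ) • σ m) * P) * Q).trace := by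
      rw [show (∑ m, (lam m : ℂ) • σ m) * (P * Q * P)
          = ((∑ m, (lam m : ℂ) • σ m) * P * Q) * P by noncomm_ring]
      rw [Matrix.trace_mul_comm]
      congr 1
      noncomm_ring
    have hpos : 0 ≤ (((((D : ℂ))⁻¹ • P - P * (∑ m, (lam m : ℂ) • σ m) * P) * Q).trace).re :=
      trace_mul_psd_nonneg h4 hQ_psd
    have hexp : (((((D : ℂ))⁻¹ • P - P * (∑ m, (lam m : ℂ) • σ m) * P) * Q).trace).re
        = (D:ℝ)⁻¹ * ((P * Q).trace).re
          - (((P * (∑ m, (lam m : ℂ) • σ m) * P) * Q).trace).re := by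
      rw [Matrix.sub_mul, Matrix.trace_sub, Complex.sub_re, smul_mul_assoc, Matrix.trace_smul]
      congr 1
      rw [smul_eq_mul, show ((D:ℂ))⁻¹ = (((((D:ℝ))⁻¹ : ℝ)) : ℂ) by
        rw [← Complex.ofReal_natCast, ← Complex.ofReal_inv], Complex.re_ofReal_mul]
    have hPQ_le : ((P * Q).trace).re ≤ (d:ℝ) := by
      have h0 : 0 ≤ (((1 - P) * Q).trace).re := trace_mul_psd_nonneg h1P_psd hQ_psd
      have : ((1 - P) * Q).trace = Q.trace - (P * Q).trace := by
        rw [Matrix.sub_mul, Matrix.one_mul, Matrix.trace_sub]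
      rw [this, Complex.sub_re] at h0
      linarith [hQd]
    have hPQ_0 : 0 ≤ ((P * Q).trace).re := trace_mul_psd_nonneg hP_psd hQ_psd
    have hDinv : (0:ℝ) ≤ (D:ℝ)⁻¹ := by positivity
    rw [hcyc]
    have : (D:ℝ)⁻¹ * ((P * Q).trace).re ≤ (D:ℝ)⁻¹ * d :=
      mul_le_mul_of_nonneg_left hPQ_le hDinv
    have hfin : (((P * (∑ m, (lam m : ℂ) • σ m) * P) * Q).trace).re
        ≤ (D:ℝ)⁻¹ * ((P * Q).trace).re := by linarith [hpos, hexp.symm.le, hexp.le]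
    calc (((P * (∑ m, (lam m : ℂ) • σ m) * P) * Q).trace).re
        ≤ (D:ℝ)⁻¹ * ((P * Q).trace).re := hfin
    _ ≤ (D:ℝ)⁻¹ * d := this
    _ = (d:ℝ)/D := by ring
  -- linearity of trace in the ensemble
  have lin : ∀ X : Matrix (Fin ν) (Fin ν) ℂ,
      (((∑ m, (lam m : ℂ) • σ m) * X).trace).re = ∑ m, lam m * ((σ m * X).trace).re := by
    intro X
    rw [Finset.sum_mul, Matrix.trace_sum, Complex.re_sum]
    congr 1; ext m
    rw [smul_mul_assoc, Matrix.trace_smul]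
    exact Complex.re_ofReal_mul _ _
  -- greedy codebook construction
  have greedy : ∀ n, n ≤ N → ∃ F : ℕ → ι, ∀ k, k < n →
      (∑ j ∈ Finset.range k, ((σ (F k) * (P * Pm (F j) * P)).trace).re) ≤ γ := by
    intro n
    induction n with
    | zero => exact fun _ => ⟨fun _ => m₀, fun k hk => absurd hk (Nat.not_lt_zero k)⟩
    | succ n ih =>
        intro hn1
        obtain ⟨F, hF⟩ := ih (le_trans (Nat.le_succ n) hn1)
        have havg : ∑ m, lam m *
            (∑ j ∈ Finset.range n, ((σ m * (P * Pm (F j) * P)).trace).re) ≤ γ := by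
          have hswap : ∑ m, lam m *
              (∑ j ∈ Finset.range n, ((σ m * (P * Pm (F j) * P)).trace).re)
              = ∑ j ∈ Finset.range n, ∑ m, lam m * ((σ m * (P * Pm (F j) * P)).trace).re := by
            simp_rw [Finset.mul_sum]
            rw [Finset.sum_comm]
          rw [hswap]
          have hterm : ∀ j ∈ Finset.range n,
              ∑ m, lam m * ((σ m * (P * Pm (F j) * P)).trace).re ≤ (d:ℝ)/D := by
            intro j _
            rw [← lin]
            exact key_avg (Pm (F j)) (hPm (F j)).1 (hPm (F j)).2 (h3 (F j))
          calc ∑ j ∈ Finset.range n, ∑ m, lam m * ((σ m * (P * Pm (F j) * P)).trace).re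
              ≤ ∑ j ∈ Finset.range n, (d:ℝ)/D := Finset.sum_le_sum hterm
          _ = n * ((d:ℝ)/D) := by rw [Finset.sum_const, Finset.card_range]; ring
          _ ≤ N * ((d:ℝ)/D) := by
              apply mul_le_mul_of_nonneg_right _ (by positivity)
              exact_mod_cast Nat.cast_le.mpr (le_trans (Nat.le_succ n) hn1)
          _ ≤ γ := by
              rw [div_eq_mul_inv, ← mul_assoc]
              calc (N:ℝ) * d * (D:ℝ)⁻¹ ≤ γ * D * (D:ℝ)⁻¹ := by
                    apply mul_le_mul_of_nonneg_right hNdD (by positivity)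
              _ = γ := by field_simp
        obtain ⟨m, hm⟩ := exists_le_of_weighted lam _ γ hlam0 hlamsum havg
        refine ⟨Function.update F n m, fun k hk => ?_⟩
        rcases Nat.lt_succ_iff_lt_or_eq.mp hk with hk' | hk'
        · have e1 : Function.update F n m k = F k := Function.update_of_ne (Nat.ne_of_lt hk') m F
          have e2 : ∀ j ∈ Finset.range k, ((σ (Function.update F n m k) *
              (P * Pm (Function.update F n m j) * P)).trace).re
              = ((σ (F k) * (P * Pm (F j) * P)).trace).re := by
            intro j hj
            rw [e1, Function.update_of_ne (Nat.ne_of_lt (lt_trans (Finset.mem_range.mp hj) hk')) m F]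
          rw [Finset.sum_congr rfl e2]
          exact hF k hk'
        · subst hk'
          have e1 : Function.update F k m k = m := Function.update_self k m F
          have e2 : ∀ j ∈ Finset.range k, ((σ (Function.update F k m k) *
              (P * Pm (Function.update F k m j) * P)).trace).re
              = ((σ m * (P * Pm (F j) * P)).trace).re := by
            intro j hj
            rw [e1, Function.update_of_ne (Nat.ne_of_lt (Finset.mem_range.mp hj)) m F]
          rw [Finset.sum_congr rfl e2]
          exact hm
  obtain ⟨F, hF⟩ := greedy N le_rfl
  -- the decoding operators
  set R : ℕ → Matrix (Fin ν) (Fin ν) ℂ := chain (fun j => 1 - Pm (F j)) with hR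
  set Cc : ℕ → Matrix (Fin ν) (Fin ν) ℂ := fun k => Pm (F k) * R k with hCc
  set Lam : ℕ → Matrix (Fin ν) (Fin ν) ℂ := fun k => (Cc k * P)ᴴ * (Cc k * P) with hLam
  -- POVM sum identity
  have povm : ∀ n, ∑ k ∈ Finset.range n, (Cc k)ᴴ * Cc k = 1 - (R n)ᴴ * R n := by
    intro n
    induction n with
    | zero =>
        simp [hR, chain]
    | succ n ih =>
        rw [Finset.sum_range_succ, ih]
        have hRn1 : R (n+1) = (1 - Pm (F n)) * R n := by rw [hR]; rfl
        have hsub : ((1:Matrix (Fin ν) (Fin ν) ℂ) - Pm (F n))ᴴ * (1 - Pm (F n))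
            = 1 - Pm (F n) := by
          rw [(one_sub_herm (hPm (F n)).1).eq]
          exact one_sub_idem (hPm (F n)).2
        have hCn : (Cc n)ᴴ * Cc n = (R n)ᴴ * (Pm (F n)) * R n := by
          simp only [hCc]
          exact sandwich (R n) (hPm (F n)).1 (hPm (F n)).2
        have hRR : (R (n+1))ᴴ * R (n+1) = (R n)ᴴ * R n - (R n)ᴴ * (Pm (F n)) * R n := by
          rw [hRn1]
          calc ((1 - Pm (F n)) * R n)ᴴ * ((1 - Pm (F n)) * R n)
              = (R n)ᴴ * ((1 - Pm (F n))ᴴ * (1 - Pm (F n))) * R n := by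
                rw [Matrix.conjTranspose_mul]; noncomm_ring
          _ = (R n)ᴴ * (1 - Pm (F n)) * R n := by rw [hsub]
          _ = (R n)ᴴ * R n - (R n)ᴴ * (Pm (F n)) * R n := by noncomm_ring
        rw [hCn, hRR]
        abel
  -- the sub-POVM property
  have hsum_lam : ∑ k ∈ Finset.range N, Lam k = P - (R N * P)ᴴ * (R N * P) := by
    have hone : ∀ k, Lam k = Pᴴ * ((Cc k)ᴴ * Cc k) * P := by
      intro k
      rw [hLam]
      calc (Cc k * P)ᴴ * (Cc k * P) = Pᴴ * (Cc k)ᴴ * (Cc k * P) := by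
            rw [Matrix.conjTranspose_mul]
      _ = Pᴴ * ((Cc k)ᴴ * Cc k) * P := by noncomm_ring
    calc ∑ k ∈ Finset.range N, Lam k
        = ∑ k ∈ Finset.range N, Pᴴ * ((Cc k)ᴴ * Cc k) * P := by
          exact Finset.sum_congr rfl fun k _ => hone k
    _ = Pᴴ * (∑ k ∈ Finset.range N, (Cc k)ᴴ * Cc k) * P := by
          rw [Finset.mul_sum, Finset.sum_mul]
    _ = Pᴴ * (1 - (R N)ᴴ * R N) * P := by rw [povm N]
    _ = P - (R N * P)ᴴ * (R N * P) := by
          rw [Matrix.conjTranspose_mul, hPH.eq]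
          calc P * (1 - (R N)ᴴ * R N) * P = P * P - P * ((R N)ᴴ * R N) * P := by noncomm_ring
          _ = P - P * (R N)ᴴ * (R N * P) := by rw [hPI]; noncomm_ring
  have hsubpovm : ((1 : Matrix (Fin ν) (Fin ν) ℂ)
      - ∑ k ∈ Finset.range N, Lam k).PosSemidef := by
    rw [hsum_lam]
    have : (1 : Matrix (Fin ν) (Fin ν) ℂ) - (P - (R N * P)ᴴ * (R N * P))
        = (1 - P) + (R N * P)ᴴ * (R N * P) := by abel
    rw [this]
    exact Matrix.PosSemidef.add h1P_psd (Matrix.posSemidef_conjTranspose_mul_self _)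
  -- the per-codeword error bound
  have herr : ∀ k, k < N → 1 - 4 * (ε + Real.sqrt (8 * ε)) - 8 * γ
      ≤ ((σ (F k) * Lam k).trace).re := by
    intro k hkN
    obtain ⟨B, hB⟩ := psd_decomp (hσ (F k)).1
    have htr1 : ((σ (F k)).trace).re = 1 := by rw [(hσ (F k)).2]; exact Complex.one_re
    -- trace of sigma * P is between 1 - eps and 1
    have htrP_ge : 1 - ε ≤ ((σ (F k) * P).trace).re := h2 (F k)
    have htrP_le : ((σ (F k) * P).trace).re ≤ 1 := by
      have h0 : 0 ≤ ((σ (F k) * (1 - P)).trace).re :=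
        trace_mul_psd_nonneg (hσ (F k)).1 h1P_psd
      have hsplit : (σ (F k) * (1 - P)).trace = (σ (F k)).trace - (σ (F k) * P).trace := by
        rw [Matrix.mul_sub, Matrix.mul_one, Matrix.trace_sub]
      rw [hsplit, Complex.sub_re, htr1] at h0
      linarith
    -- gentle measurement bound
    have hgentle : 1 - ε - 2 * Real.sqrt ε ≤ ((σ (F k) * (P * Pm (F k) * P)).trace).re := by
      have hg := gentle B P (Pm (F k)) hPH hPI (hPm (F k)).1 (hPm (F k)).2
      rw [← hB] at hg
      have e1 : ((σ (F k) * (1 - P)).trace).re = 1 - ((σ (F k) * P).trace).re := by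
        rw [Matrix.mul_sub, Matrix.mul_one, Matrix.trace_sub, Complex.sub_re, htr1]
      have e2 : ((σ (F k)).trace).re = 1 := htr1
      rw [e1, e2, Real.sqrt_one, mul_one] at hg
      have hs : Real.sqrt (1 - ((σ (F k) * P).trace).re) ≤ Real.sqrt ε :=
        Real.sqrt_le_sqrt (by linarith)
      have h1' := h1 (F k)
      nlinarith [Real.sqrt_nonneg (1 - ((σ (F k) * P).trace).re), Real.sqrt_nonneg ε]
    -- the Gao chain for codeword k
    set g : ℕ → Matrix (Fin ν) (Fin ν) ℂ :=
      fun j => if j < k then 1 - Pm (F j) else Pm (F k) with hg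
    have hgproj : ∀ j, (g j).IsHermitian ∧ g j * g j = g j := by
      intro j
      simp only [hg]
      by_cases hj : j < k
      · rw [if_pos hj]
        exact ⟨one_sub_herm (hPm (F j)).1, one_sub_idem (hPm (F j)).2⟩
      · rw [if_neg hj]
        exact ⟨(hPm (F k)).1, (hPm (F k)).2⟩
    have hchainC : chain g (k+1) = Cc k := by
      have h1c : chain g (k+1) = g k * chain g k := rfl
      have h2c : chain g k = R k := by
        rw [hR]
        exact chain_congr k fun j hj => by simp only [hg]; rw [if_pos hj]
      rw [h1c, h2c]
      simp only [hg, hCc]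
      rw [if_neg (lt_irrefl k)]
    -- apply Gao to every vector of the decomposition
    have hper : ∀ i, n2 (P *ᵥ xvec B i) - n2 ((Cc k * P) *ᵥ xvec B i)
        ≤ 4 * ((∑ j ∈ Finset.range k, n2 ((Pm (F j) * P) *ᵥ xvec B i))
            + (n2 (P *ᵥ xvec B i) - n2 ((Pm (F k) * P) *ᵥ xvec B i))) := by
      intro i
      have hgao := gao g hgproj (P *ᵥ xvec B i) (k+1)
      have hchainv : chain g (k+1) *ᵥ (P *ᵥ xvec B i) = (Cc k * P) *ᵥ xvec B i := by
        rw [Matrix.mulVec_mulVec, hchainC]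
      have hfail : ∑ j ∈ Finset.range (k+1),
          (n2 (P *ᵥ xvec B i) - n2 (g j *ᵥ (P *ᵥ xvec B i)))
          = (∑ j ∈ Finset.range k, n2 ((Pm (F j) * P) *ᵥ xvec B i))
            + (n2 (P *ᵥ xvec B i) - n2 ((Pm (F k) * P) *ᵥ xvec B i)) := by
        rw [Finset.sum_range_succ]
        congr 1
        · apply Finset.sum_congr rfl
          intro j hj
          have hjk : j < k := Finset.mem_range.mp hj
          have hgj : g j = 1 - Pm (F j) := by simp only [hg]; rw [if_pos hjk]
          rw [hgj]
          have hpy := proj_pyth (hPm (F j)).1 (hPm (F j)).2 (P *ᵥ xvec B i)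
          have hmv : ((1:Matrix (Fin ν) (Fin ν) ℂ) - Pm (F j)) *ᵥ (P *ᵥ xvec B i)
              = (P *ᵥ xvec B i) - Pm (F j) *ᵥ (P *ᵥ xvec B i) := by
            rw [Matrix.sub_mulVec, Matrix.one_mulVec]
          rw [hmv, Matrix.mulVec_mulVec]
          rw [← Matrix.mulVec_mulVec]
          linarith
        · have hgk : g k = Pm (F k) := by simp only [hg]; rw [if_neg (lt_irrefl k)]
          rw [hgk, Matrix.mulVec_mulVec]
      rw [hchainv] at hgao
      rw [hfail] at hgao
      exact hgao
    -- sum the per-vector bounds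
    have hsum_per : ((σ (F k) * P).trace).re - ((σ (F k) * Lam k).trace).re
        ≤ 4 * ((∑ j ∈ Finset.range k, ((σ (F k) * (P * Pm (F j) * P)).trace).re)
            + (((σ (F k) * P).trace).re - ((σ (F k) * (P * Pm (F k) * P)).trace).re)) := by
      have hS0 : ∑ i, n2 (P *ᵥ xvec B i) = ((σ (F k) * P).trace).re := by
        rw [sum_n2_mulVec, hPH.eq, hPI, ← hB]
      have hS1 : ∑ i, n2 ((Cc k * P) *ᵥ xvec B i) = ((σ (F k) * Lam k).trace).re := by
        rw [sum_n2_mulVec, ← hB, hLam]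
      have hS2 : ∀ j, ∑ i, n2 ((Pm (F j) * P) *ᵥ xvec B i)
          = ((σ (F k) * (P * Pm (F j) * P)).trace).re := by
        intro j
        rw [sum_n2_mulVec, sandwich P (hPm (F j)).1 (hPm (F j)).2, hPH.eq, ← hB]
      have hbig := Finset.sum_le_sum (fun i (_ : i ∈ Finset.univ) => hper i)
      have hrhs : ∑ i, (4 : ℝ) * ((∑ j ∈ Finset.range k, n2 ((Pm (F j) * P) *ᵥ xvec B i))
            + (n2 (P *ᵥ xvec B i) - n2 ((Pm (F k) * P) *ᵥ xvec B i)))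
          = 4 * ((∑ j ∈ Finset.range k, ((σ (F k) * (P * Pm (F j) * P)).trace).re)
            + (((σ (F k) * P).trace).re - ((σ (F k) * (P * Pm (F k) * P)).trace).re)) := by
        rw [← Finset.mul_sum]
        congr 1
        rw [Finset.sum_add_distrib, Finset.sum_sub_distrib]
        congr 1
        · rw [Finset.sum_comm]
          apply Finset.sum_congr rfl
          intro j _
          exact hS2 j
        · rw [hS0, hS2 k]
      rw [hrhs] at hbig
      calc ((σ (F k) * P).trace).re - ((σ (F k) * Lam k).trace).re
          = ∑ i, (n2 (P *ᵥ xvec B i) - n2 ((Cc k * P) *ᵥ xvec B i)) := by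
            rw [Finset.sum_sub_distrib, hS0, hS1]
      _ ≤ _ := hbig
    -- put everything together
    have hval := hF k hkN
    have h5 : ((σ (F k) * Lam k).trace).re ≥ 1 - 5*ε - 8*Real.sqrt ε - 4*γ := by
      linarith [hsum_per, hval, hgentle, htrP_ge, htrP_le]
    linarith [h5, h28, hε14, Real.sqrt_nonneg ε, hγ0.le]
  -- conclude
  refine ⟨fun k => F k, fun k => Lam k, fun k => Matrix.posSemidef_conjTranspose_mul_self _, ?_, ?_⟩
  · have : ∑ k : Fin N, Lam (k : ℕ) = ∑ k ∈ Finset.range N, Lam k :=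
      Fin.sum_univ_eq_sum_range (fun k => Lam k) N
    rw [this]
    exact hsubpovm
  · intro k
    exact herr k k.isLt
end
end

section
/- (Hayashi–Nagaoka operator inequality) Let S and T be n×n complex matrices with 0 ≤ S ≤ I (S positive semidefinite and I − S positive semidefinite) and T positive semidefinite, and suppose S + T is positive definite. Then I − (S+T)^{−1/2} S (S+T)^{−1/2} ≤ 2(I − S) + 4T in the Loewner order, where (S+T)^{−1/2} denotes the inverse of the positive semidefinite square root of S+T. -/
open Matrix ComplexOrder

noncomputable section

/-- The positive semidefinite square root of a positive semidefinite matrix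
(the definition Mathlib had under this name, since removed). -/
def Matrix.PosSemidef.sqrt {n : Type*} [Fintype n] [DecidableEq n] {A : Matrix n n ℂ}
    (hA : A.PosSemidef) : Matrix n n ℂ :=
  hA.1.eigenvectorUnitary.1 * diagonal ((↑) ∘ (√·) ∘ hA.1.eigenvalues) *
    (star hA.1.eigenvectorUnitary : Matrix n n ℂ)

open scoped Matrix.Norms.L2Operator MatrixOrder
open CFC Ring

/-!
With `P = √(S + T)` and `Q = P⁻¹`, the identity `P² = S + T` alone gives
`2(1 - S) + 4T - (1 - QSQ) = 4(P - S) + 2(Q - 1)S(Q - 1) + (2 - Q)T(2 - Q)`.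
Both conjugates are positive, and `S ≤ P` by operator monotonicity of the square root,
since `0 ≤ S ≤ 1` gives `S² ≤ S ≤ S + T`.
-/

theorem Matrix.PosSemidef.sqrt_eq_cfcSqrt {n : Type*} [Fintype n] [DecidableEq n]
    {A : Matrix n n ℂ} (hA : A.PosSemidef) : hA.sqrt = CFC.sqrt A := by
  rw [CFC.sqrt_eq_cfc, cfc_nnreal_eq_real _ A, hA.1.cfc_eq]
  simp only [IsHermitian.cfc, Matrix.PosSemidef.sqrt, Unitary.conjStarAlgAut_apply]
  congr 3
  funext i
  simp [hA.eigenvalues_nonneg i]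

theorem hayashi_nagaoka_identity {K A : Type*} [Semiring K] [Ring A] [Module K A] {S T P Q : A}
    (hQP : Q * P = 1) (hPQ : P * Q = 1) (hP : P * P = S + T) :
    (2 : K) • (1 - S) + (4 : K) • T - (1 - Q * S * Q) =
      4 • (P - S) + 2 • ((Q - 1) * S * (Q - 1)) + (2 - Q) * T * (2 - Q) := by
  have hT : T = P * P - S := by rw [hP]; abel
  have hQP' (X : A) : Q * (P * X) = X := by rw [← mul_assoc, hQP, one_mul]
  rw [ofNat_smul_eq_nsmul K, ofNat_smul_eq_nsmul K, ← one_add_one_eq_two (R := A), hT]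
  simp only [mul_add, add_mul, mul_sub, sub_mul, mul_assoc, hQP', hPQ, mul_one, one_mul, smul_sub]
  abel

namespace CStarAlgebra

variable {A : Type*} [CStarAlgebra A] [PartialOrder A] [StarOrderedRing A]

theorem le_sqrt_add {S T : A} (hS₀ : 0 ≤ S) (hS₁ : S ≤ 1) (hT : 0 ≤ T) : S ≤ sqrt (S + T) := by
  have hSS : S * S ≤ S := by simpa only [pow_two, pow_one] using pow_antitone hS₀ hS₁ one_le_two
  calc S = sqrt (S * S) := (sqrt_mul_self S).symm
    _ ≤ sqrt (S + T) := sqrt_le_sqrt _ _ (hSS.trans (le_add_of_nonneg_right hT))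

theorem hayashi_nagaoka {S T : A} (hS₀ : 0 ≤ S) (hS₁ : S ≤ 1) (hT : 0 ≤ T)
    (hST : IsUnit (S + T)) :
    1 - (sqrt (S + T))⁻¹ʳ * S * (sqrt (S + T))⁻¹ʳ ≤ (2 : ℂ) • (1 - S) + (4 : ℂ) • T := by
  have hST₀ : 0 ≤ S + T := add_nonneg hS₀ hT
  set P := sqrt (S + T)
  have hP : IsUnit P := (isUnit_sqrt_iff _).mpr hST
  have hQ : IsSelfAdjoint P⁻¹ʳ := (sqrt_nonneg _).isSelfAdjoint.ringInverse
  rw [← sub_nonneg, hayashi_nagaoka_identity (inverse_mul_cancel _ hP) (mul_inverse_cancel _ hP)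
    (sqrt_mul_sqrt_self _)]
  have hPS : 0 ≤ P - S := sub_nonneg.mpr (le_sqrt_add hS₀ hS₁ hT)
  have hQS : 0 ≤ (P⁻¹ʳ - 1) * S * (P⁻¹ʳ - 1) := (hQ.sub (.one A)).conjugate_nonneg hS₀
  have hQT : 0 ≤ (2 - P⁻¹ʳ) * T * (2 - P⁻¹ʳ) :=
    ((IsSelfAdjoint.ofNat 2).sub hQ).conjugate_nonneg hT
  positivity

end CStarAlgebra

/-- **Hayashi–Nagaoka operator inequality.**
If `0 ≤ S ≤ I`, `T ≥ 0` and `S + T` is positive definite, then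
`I − (S+T)^{−1/2} S (S+T)^{−1/2} ≤ 2(I − S) + 4T` in the Loewner order. -/
theorem hayashi_nagaoka {n : ℕ} (S T : Matrix (Fin n) (Fin n) ℂ)
    (hS : S.PosSemidef) (hSle : ((1 : Matrix (Fin n) (Fin n) ℂ) - S).PosSemidef)
    (hT : T.PosSemidef) (hST : (S + T).PosDef) :
    ((2 : ℂ) • ((1 : Matrix (Fin n) (Fin n) ℂ) - S) + (4 : ℂ) • T -
      ((1 : Matrix (Fin n) (Fin n) ℂ) -
        (hST.posSemidef.sqrt)⁻¹ * S * (hST.posSemidef.sqrt)⁻¹)).PosSemidef := by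
  rw [hST.posSemidef.sqrt_eq_cfcSqrt, nonsing_inv_eq_ringInverse, ← le_iff]
  exact CStarAlgebra.hayashi_nagaoka hS.nonneg (le_iff.mpr hSle) hT.nonneg hST.isUnit
end
end

section
/- (Generalized dephasing channels) Fix unit vectors φ_1,…,φ_d ∈ ℂ^e (not necessarily orthogonal). Define the generalized dephasing channel N on d×d matrices by N(ρ)_{i i'} = ρ_{i i'} ⟨φ_{i'}, φ_i⟩ and its complementary channel N^c(ρ) = ∑_{i=1}^d ρ_{ii} |φ_i⟩⟨φ_i|. Then for every density operator ρ on ℂ^d with diagonal entries r_i = ρ_{ii}: H(ρ) + H(N(ρ)) − H(N^c(ρ)) ≤ 2·(−∑_i r_i log₂ r_i) − H(∑_i r_i |φ_i⟩⟨φ_i|), with equality whenever ρ is diagonal in the standard basis. In particular, the mutual information I(A;B) of the channel is maximized by input states diagonal in the dephasing basis. -/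
open Matrix ComplexOrder

noncomputable section

/-- von Neumann entropy (base 2), via the eigenvalues of a Hermitian matrix. -/
def vnEntropy {ι : Type*} [Fintype ι] [DecidableEq ι] (A : Matrix ι ι ℂ) : ℝ :=
  if h : A.IsHermitian then -∑ i, h.eigenvalues i * Real.logb 2 (h.eigenvalues i) else 0

/-- The generalized dephasing channel with environment states `φ_i`:
`N(ρ)_{i i'} = ρ_{i i'} ⟨φ_{i'}, φ_i⟩`. -/
def gdChannel {d e : ℕ} (φ : Fin d → (Fin e → ℂ)) (ρ : Matrix (Fin d) (Fin d) ℂ) :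
    Matrix (Fin d) (Fin d) ℂ :=
  Matrix.of fun i i' => ρ i i' * ∑ x, star (φ i' x) * φ i x

/-- The complementary channel `N^c(ρ) = ∑_i ρ_{ii} |φ_i⟩⟨φ_i|`. -/
def gdComplement {d e : ℕ} (φ : Fin d → (Fin e → ℂ)) (ρ : Matrix (Fin d) (Fin d) ℂ) :
    Matrix (Fin e) (Fin e) ℂ :=
  ∑ i, ρ i i • proj (φ i)

/-! Write a Hermitian `A` as `U diag(λ) U*`. Its diagonal is then `D λ` with `D_ij = |U_ij|²`
doubly stochastic, so concavity of `-x log x` gives `H(λ) ≤ H(diag A)`; when `A` is diagonal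
also `λ = Dᵀ (diag A)`, and the two entropies agree. The channel `N` is the Schur product of `ρ`
with the Gram matrix of the unit vectors `φ_i`: it preserves positivity and the diagonal, and
fixes diagonal `ρ`. Hence `H(ρ) + H(N(ρ)) ≤ 2 H(r)`, with equality for diagonal `ρ`, while
`N^c(ρ)` depends on `ρ` only through `r`. -/

open Finset

theorem ConcaveOn.sum_le_sum_mulVec_of_mem_doublyStochastic {n : Type*} [Fintype n]
    [DecidableEq n] {s : Set ℝ} {f : ℝ → ℝ} (hf : ConcaveOn ℝ s f) {D : Matrix n n ℝ}
    (hD : D ∈ doublyStochastic ℝ n) {v : n → ℝ} (hv : ∀ j, v j ∈ s) :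
    ∑ j, f (v j) ≤ ∑ i, f ((D *ᵥ v) i) :=
  calc ∑ j, f (v j) = ∑ i, ∑ j, D i j * f (v j) := by
        rw [sum_comm]
        simp only [← sum_mul, sum_col_of_mem_doublyStochastic hD, one_mul]
    _ ≤ ∑ i, f ((D *ᵥ v) i) := sum_le_sum fun i _ => by
        simpa [mulVec, dotProduct] using hf.le_map_sum (t := univ)
          (fun j _ => nonneg_of_mem_doublyStochastic hD) (sum_row_of_mem_doublyStochastic hD i)
          (fun j _ => hv j)

namespace Matrix

variable {m n : Type*}

def entrywiseNormSq (U : Matrix m n ℂ) : Matrix m n ℝ :=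
  of fun i j => Complex.normSq (U i j)

theorem entrywiseNormSq_conjTranspose (U : Matrix m n ℂ) :
    entrywiseNormSq Uᴴ = (entrywiseNormSq U)ᵀ := by
  ext i j
  simp [entrywiseNormSq]

theorem mul_diagonal_mul_conjTranspose_apply_self [Fintype n] [DecidableEq n]
    (U : Matrix m n ℂ) (w : n → ℝ) (i : m) :
    (U * diagonal (fun j => (w j : ℂ)) * Uᴴ) i i = ((entrywiseNormSq U *ᵥ w) i : ℂ) := by
  rw [mul_apply]
  simp only [mul_diagonal, entrywiseNormSq, mulVec, dotProduct, conjTranspose_apply,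
    of_apply, Complex.ofReal_sum, Complex.ofReal_mul, Complex.normSq_eq_conj_mul_self]
  exact Finset.sum_congr rfl fun j _ => by rw [Complex.star_def]; ring

theorem entrywiseNormSq_mulVec_one [Fintype n] [DecidableEq m] [DecidableEq n]
    {U : Matrix m n ℂ} (hU : U * Uᴴ = 1) : entrywiseNormSq U *ᵥ 1 = 1 := by
  ext i
  have := mul_diagonal_mul_conjTranspose_apply_self U 1 i
  simp only [Pi.one_apply, Complex.ofReal_one, diagonal_one, Matrix.mul_one, hU,
    one_apply_eq] at this
  exact_mod_cast this.symm

theorem entrywiseNormSq_mem_doublyStochastic [Fintype n] [DecidableEq n] {U : Matrix n n ℂ}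
    (hU : U ∈ unitaryGroup n ℂ) : entrywiseNormSq U ∈ doublyStochastic ℝ n := by
  refine ⟨fun i j => Complex.normSq_nonneg _, entrywiseNormSq_mulVec_one
    (mem_unitaryGroup_iff.mp hU), ?_⟩
  rw [← mulVec_transpose, ← entrywiseNormSq_conjTranspose, entrywiseNormSq_mulVec_one]
  simpa [← star_eq_conjTranspose] using mem_unitaryGroup_iff'.mp hU

namespace IsHermitian

variable [Fintype n] [DecidableEq n] {A : Matrix n n ℂ} (hA : A.IsHermitian)
include hA

theorem re_diag_eq_mulVec_eigenvalues :
    (fun i => (A i i).re) = entrywiseNormSq hA.eigenvectorUnitary *ᵥ hA.eigenvalues := by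
  ext i
  have := mul_diagonal_mul_conjTranspose_apply_self hA.eigenvectorUnitary hA.eigenvalues i
  conv_lhs => rw [hA.spectral_theorem, Unitary.conjStarAlgAut_apply]
  exact congrArg Complex.re this

theorem eigenvalues_eq_mulVec_re_diag (hdiag : A.IsDiag) :
    hA.eigenvalues = (entrywiseNormSq hA.eigenvectorUnitary)ᵀ *ᵥ fun i => (A i i).re := by
  ext j
  have hA_eq : A = diagonal fun i => ((A i i).re : ℂ) := by
    conv_lhs => rw [← hdiag.diagonal_diag, ← hA.coe_re_diag]
    rfl
  -- `diag(λ) = U* A U`, where now `A` is the diagonal matrix and `U*` plays the role of `U`.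
  have := mul_diagonal_mul_conjTranspose_apply_self (hA.eigenvectorUnitary : Matrix n n ℂ)ᴴ
    (fun i => (A i i).re) j
  rw [← hA_eq, conjTranspose_conjTranspose, entrywiseNormSq_conjTranspose,
    ← star_eq_conjTranspose, ← Unitary.conjStarAlgAut_star_apply (S := ℂ),
    hA.conjStarAlgAut_star_eigenvectorUnitary] at this
  simpa using congrArg Complex.re this

end IsHermitian

end Matrix

variable {ι : Type*} [Fintype ι]

def shannonEntropy (p : ι → ℝ) : ℝ :=
  -∑ i, p i * Real.logb 2 (p i)

theorem shannonEntropy_eq_sum_negMulLog_div (p : ι → ℝ) :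
    shannonEntropy p = (∑ i, Real.negMulLog (p i)) / Real.log 2 := by
  rw [shannonEntropy, sum_div, ← sum_neg_distrib]
  refine sum_congr rfl fun i _ => ?_
  rw [Real.negMulLog, Real.logb]
  ring

theorem shannonEntropy_le_mulVec_of_mem_doublyStochastic [DecidableEq ι] {D : Matrix ι ι ℝ}
    (hD : D ∈ doublyStochastic ℝ ι) {p : ι → ℝ} (hp : 0 ≤ p) :
    shannonEntropy p ≤ shannonEntropy (D *ᵥ p) := by
  rw [shannonEntropy_eq_sum_negMulLog_div, shannonEntropy_eq_sum_negMulLog_div]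
  exact div_le_div_of_nonneg_right
    (Real.concaveOn_negMulLog.sum_le_sum_mulVec_of_mem_doublyStochastic hD fun j => hp j)
    (Real.log_nonneg one_le_two)

theorem vnEntropy_eq_shannonEntropy_eigenvalues [DecidableEq ι] {A : Matrix ι ι ℂ}
    (hA : A.IsHermitian) : vnEntropy A = shannonEntropy hA.eigenvalues :=
  dif_pos hA

namespace Matrix.PosSemidef

variable [DecidableEq ι] {A : Matrix ι ι ℂ} (hA : A.PosSemidef)
include hA

theorem vnEntropy_le_shannonEntropy_re_diag :
    vnEntropy A ≤ shannonEntropy fun i => (A i i).re := by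
  rw [vnEntropy_eq_shannonEntropy_eigenvalues hA.1, hA.1.re_diag_eq_mulVec_eigenvalues]
  exact shannonEntropy_le_mulVec_of_mem_doublyStochastic
    (entrywiseNormSq_mem_doublyStochastic hA.1.eigenvectorUnitary.2) hA.eigenvalues_nonneg

theorem vnEntropy_eq_shannonEntropy_re_diag_of_isDiag (hdiag : A.IsDiag) :
    vnEntropy A = shannonEntropy fun i => (A i i).re := by
  refine le_antisymm hA.vnEntropy_le_shannonEntropy_re_diag ?_
  rw [vnEntropy_eq_shannonEntropy_eigenvalues hA.1, hA.1.eigenvalues_eq_mulVec_re_diag hdiag]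
  refine shannonEntropy_le_mulVec_of_mem_doublyStochastic ?_ fun i => ?_
  · exact transpose_mem_doublyStochastic_iff.mpr
      (entrywiseNormSq_mem_doublyStochastic hA.1.eigenvectorUnitary.2)
  · exact Complex.nonneg_iff.mp hA.diag_nonneg |>.1

end Matrix.PosSemidef

section GeneralizedDephasing

variable {d e : ℕ} (φ : Fin d → (Fin e → ℂ)) {ρ : Matrix (Fin d) (Fin d) ℂ}

theorem gdChannel_eq_hadamard_gram (ρ : Matrix (Fin d) (Fin d) ℂ) :
    gdChannel φ ρ = ρ ⊙ (of φ * (of φ)ᴴ) := by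
  ext i i'
  simp only [gdChannel, hadamard_apply, mul_apply, conjTranspose_apply, of_apply]
  congr 1
  exact sum_congr rfl fun x _ => mul_comm _ _

theorem gdChannel_posSemidef (hρ : ρ.PosSemidef) : (gdChannel φ ρ).PosSemidef := by
  rw [gdChannel_eq_hadamard_gram]
  exact hρ.hadamard (posSemidef_self_mul_conjTranspose _)

variable {φ}

theorem gdChannel_apply_self (hφ : ∀ i, ∑ x, Complex.normSq (φ i x) = 1)
    (ρ : Matrix (Fin d) (Fin d) ℂ) (i : Fin d) : gdChannel φ ρ i i = ρ i i := by
  have hnorm : ∑ x, star (φ i x) * φ i x = 1 := by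
    simp only [Complex.star_def, ← Complex.normSq_eq_conj_mul_self, ← Complex.ofReal_sum, hφ i,
      Complex.ofReal_one]
  rw [gdChannel, of_apply, hnorm, mul_one]

theorem gdChannel_eq_self_of_isDiag (hφ : ∀ i, ∑ x, Complex.normSq (φ i x) = 1)
    (hdiag : ρ.IsDiag) : gdChannel φ ρ = ρ := by
  ext i i'
  obtain rfl | hii' := eq_or_ne i i'
  · exact gdChannel_apply_self hφ ρ i
  · rw [gdChannel, of_apply, hdiag hii', zero_mul]

theorem gdComplement_eq_sum_re_diag (hρ : ρ.IsHermitian) :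
    gdComplement φ ρ = ∑ i, (((ρ i i).re : ℝ) : ℂ) • proj (φ i) := by
  refine sum_congr rfl fun i _ => ?_
  exact congrArg (· • proj (φ i)) (hρ.coe_re_apply_self i).symm

end GeneralizedDephasing

theorem generalized_dephasing_mutual_info_general {d e : ℕ}
    (φ : Fin d → (Fin e → ℂ)) (hφ : ∀ i, ∑ x, Complex.normSq (φ i x) = 1)
    (ρ : Matrix (Fin d) (Fin d) ℂ) (hρ : ρ.PosSemidef) :
    (vnEntropy ρ + vnEntropy (gdChannel φ ρ) - vnEntropy (gdComplement φ ρ) ≤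
      2 * (-∑ i, (ρ i i).re * Real.logb 2 ((ρ i i).re)) -
        vnEntropy (∑ i, (((ρ i i).re : ℝ) : ℂ) • proj (φ i)))
    ∧ ((∀ i j, i ≠ j → ρ i j = 0) →
        vnEntropy ρ + vnEntropy (gdChannel φ ρ) - vnEntropy (gdComplement φ ρ) =
          2 * (-∑ i, (ρ i i).re * Real.logb 2 ((ρ i i).re)) -
            vnEntropy (∑ i, (((ρ i i).re : ℝ) : ℂ) • proj (φ i))) := by
  have hchannel : vnEntropy (gdChannel φ ρ) ≤ shannonEntropy fun i => (ρ i i).re := by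
    simpa only [gdChannel_apply_self hφ] using
      (gdChannel_posSemidef φ hρ).vnEntropy_le_shannonEntropy_re_diag
  have hinput := hρ.vnEntropy_le_shannonEntropy_re_diag
  rw [gdComplement_eq_sum_re_diag hρ.1]
  refine ⟨by unfold shannonEntropy at *; linarith, fun hdiag => ?_⟩
  have hdiag' : ρ.IsDiag := fun i j hij => hdiag i j hij
  rw [gdChannel_eq_self_of_isDiag hφ hdiag',
    hρ.vnEntropy_eq_shannonEntropy_re_diag_of_isDiag hdiag', shannonEntropy]
  ring

/-- **Generalized dephasing channels.**  For every input density operator `ρ` with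
diagonal `r`, `H(ρ) + H(N(ρ)) − H(N^c(ρ)) ≤ 2 H(r) − H(∑ r_i φ_i)`, with equality
whenever `ρ` is diagonal in the dephasing basis; hence the channel mutual information
is maximized by inputs diagonal in the dephasing basis. -/
theorem generalized_dephasing_mutual_info {d e : ℕ}
    (φ : Fin d → (Fin e → ℂ)) (hφ : ∀ i, ∑ x, Complex.normSq (φ i x) = 1)
    (ρ : Matrix (Fin d) (Fin d) ℂ) (hρ : ρ.PosSemidef) (htr : ρ.trace = 1) :
    (vnEntropy ρ + vnEntropy (gdChannel φ ρ) - vnEntropy (gdComplement φ ρ) ≤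
      2 * (-∑ i, (ρ i i).re * Real.logb 2 ((ρ i i).re)) -
        vnEntropy (∑ i, (((ρ i i).re : ℝ) : ℂ) • proj (φ i)))
    ∧ ((∀ i j, i ≠ j → ρ i j = 0) →
        vnEntropy ρ + vnEntropy (gdChannel φ ρ) - vnEntropy (gdComplement φ ρ) =
          2 * (-∑ i, (ρ i i).re * Real.logb 2 ((ρ i i).re)) -
            vnEntropy (∑ i, (((ρ i i).re : ℝ) : ℂ) • proj (φ i))) :=
  generalized_dephasing_mutual_info_general φ hφ ρ hρ
end
end
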